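/- arXiv:2104.00908 — 2 statements merged into one kernel-verified Lean document; each statement's English description precedes it below -/
import Mathlib

section
/- Let K be a field, (A,Φ) a linear extended associative semigroup over K, and (V,*) a Φ-associative algebra. Define a bilinear product ⋆ on V ⊗ A by (x ⊗ a) ⋆ (y ⊗ b) = Σ_i (x *_{d_i} y) ⊗ c_i, where Φ(a⊗b) = Σ_i c_i ⊗ d_i. Then ⋆ is associative. -/
open TensorProduct

section Defs

variable (K : Type) [Field K]
variable (A : Type) [AddCommGroup A] [Module K A]

/-- The "right reassociated" version of `Φ ⊗ Id` acting on `A ⊗ (A ⊗ A)`. -/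
noncomputable def phiIdMap (Φ : A ⊗[K] A →ₗ[K] A ⊗[K] A) :
    A ⊗[K] (A ⊗[K] A) →ₗ[K] A ⊗[K] (A ⊗[K] A) :=
  (TensorProduct.assoc K A A A).toLinearMap ∘ₗ (LinearMap.rTensor A Φ) ∘ₗ
    (TensorProduct.assoc K A A A).symm.toLinearMap

/-- `(A, Φ)` is a linear extended associative semigroup (ℓEAS):
`(Id ⊗ Φ) ∘ (Φ ⊗ Id) ∘ (Id ⊗ Φ) = (Φ ⊗ Id) ∘ (Id ⊗ τ) ∘ (Φ ⊗ Id)` on `A^{⊗3}`. -/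
def IsLEAS (Φ : A ⊗[K] A →ₗ[K] A ⊗[K] A) : Prop :=
  (LinearMap.lTensor A Φ) ∘ₗ phiIdMap K A Φ ∘ₗ (LinearMap.lTensor A Φ)
    = phiIdMap K A Φ ∘ₗ (LinearMap.lTensor A (TensorProduct.comm K A A).toLinearMap) ∘ₗ
        phiIdMap K A Φ

variable (V : Type) [AddCommGroup V] [Module K V]

/-- Evaluation `a ⊗ (x ⊗ y) ↦ x *_a y` of a family of products `st`. -/
noncomputable def evalSt (st : A →ₗ[K] V →ₗ[K] V →ₗ[K] V) :
    A ⊗[K] (V ⊗[K] V) →ₗ[K] V :=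
  TensorProduct.lift ((TensorProduct.lift.equiv (RingHom.id K) V V V).toLinearMap ∘ₗ st)

/-- The Sweedler-type trilinear evaluation
`(c ⊗ d) ⊗ ((x ⊗ y) ⊗ z) ↦ (x *_d y) *_c z`. -/
noncomputable def rightTri (st : A →ₗ[K] V →ₗ[K] V →ₗ[K] V) :
    (A ⊗[K] A) ⊗[K] ((V ⊗[K] V) ⊗[K] V) →ₗ[K] V :=
  evalSt K A V st
    ∘ₗ (TensorProduct.leftComm K V A V).toLinearMap
    ∘ₗ (TensorProduct.map (evalSt K A V st) LinearMap.id)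
    ∘ₗ (TensorProduct.tensorTensorTensorComm K A A (V ⊗[K] V) V).toLinearMap
    ∘ₗ (LinearMap.rTensor ((V ⊗[K] V) ⊗[K] V) (TensorProduct.comm K A A).toLinearMap)

/-- `(V, st)` is a `Φ`-associative algebra:
`x *_a (y *_b z) = Σ (x *_{d_i} y) *_{c_i} z` where `Φ(a ⊗ b) = Σ c_i ⊗ d_i`. -/
def IsPhiAssoc (Φ : A ⊗[K] A →ₗ[K] A ⊗[K] A)
    (st : A →ₗ[K] V →ₗ[K] V →ₗ[K] V) : Prop :=
  ∀ (a b : A) (x y z : V),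
    st a x (st b y z) = rightTri K A V st ((Φ (a ⊗ₜ b)) ⊗ₜ ((x ⊗ₜ y) ⊗ₜ z))

/-- The space `T_A(V) = ⊕_{n≥1} A^{⊗(n−1)} ⊗ V^{⊗n}` of `A`-typed words, modelled as
`V ⊗ T(A ⊗ V)`: the typed word `a₁…a_{n−1}x₁…x_n` is `x₁ ⊗ (a₁⊗x₂)⋯(a_{n−1}⊗x_n)`. -/
abbrev TAlg : Type := V ⊗[K] TensorAlgebra K (A ⊗[K] V)

/-- The inclusion of `V` in `T_A(V)` as typed words of length one. -/
noncomputable def iotaTA : V →ₗ[K] TAlg K A V :=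
  (TensorProduct.mk K V (TensorAlgebra K (A ⊗[K] V))).flip 1

/-- The appending operation: `appTA (a ⊗ z) u = u · (a z)`. -/
noncomputable def appTA : (A ⊗[K] V) →ₗ[K] (TAlg K A V →ₗ[K] TAlg K A V) :=
  (LinearMap.lTensorHom V)
    ∘ₗ (LinearMap.mul K (TensorAlgebra K (A ⊗[K] V))).flip
    ∘ₗ (TensorAlgebra.ι K)

/-- The Sweedler-type map `(c ⊗ d) ⊗ ((u ⊗ v) ⊗ z) ↦ (u *_d v) · (c z)` used in the
recursive definition of the products on `T_A(V)`. -/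
noncomputable def recTA (st : A →ₗ[K] TAlg K A V →ₗ[K] TAlg K A V →ₗ[K] TAlg K A V) :
    (A ⊗[K] A) ⊗[K] ((TAlg K A V ⊗[K] TAlg K A V) ⊗[K] V) →ₗ[K] TAlg K A V :=
  (TensorProduct.lift (appTA K A V).flip)
    ∘ₗ (TensorProduct.map (evalSt K A (TAlg K A V) st) (LinearMap.id (M := A ⊗[K] V)))
    ∘ₗ (TensorProduct.tensorTensorTensorComm K A A (TAlg K A V ⊗[K] TAlg K A V) V).toLinearMap
    ∘ₗ (LinearMap.rTensor ((TAlg K A V ⊗[K] TAlg K A V) ⊗[K] V)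
          (TensorProduct.comm K A A).toLinearMap)

/-- `st` satisfies the defining recursion of the products `*_a` of `T_A(V)`:
`u *_a z = u·(a z)` for `z ∈ V`, and `u *_a (v·(b z)) = Σ (u *_{d_i} v)·(c_i z)`
where `Φ(a ⊗ b) = Σ c_i ⊗ d_i`. -/
def SatisfiesRecTA (Φ : A ⊗[K] A →ₗ[K] A ⊗[K] A)
    (st : A →ₗ[K] TAlg K A V →ₗ[K] TAlg K A V →ₗ[K] TAlg K A V) : Prop :=
  (∀ (a : A) (u : TAlg K A V) (z : V), st a u (iotaTA K A V z) = appTA K A V (a ⊗ₜ z) u) ∧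
  (∀ (a b : A) (u v : TAlg K A V) (z : V),
    st a u (appTA K A V (b ⊗ₜ z) v)
      = recTA K A V st ((Φ (a ⊗ₜ b)) ⊗ₜ ((u ⊗ₜ v) ⊗ₜ z)))

/-- The Sweedler-type map `(x ⊗ y) ⊗ (c ⊗ d) ↦ (x *_d y) ⊗ c` used to define the
associative product `⋆` on `V ⊗ A`. -/
noncomputable def sweedlerMul (st : A →ₗ[K] V →ₗ[K] V →ₗ[K] V) :
    (V ⊗[K] V) ⊗[K] (A ⊗[K] A) →ₗ[K] V ⊗[K] A :=
  (LinearMap.rTensor A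
      (evalSt K A V st ∘ₗ (TensorProduct.comm K (V ⊗[K] V) A).toLinearMap))
    ∘ₗ (TensorProduct.assoc K (V ⊗[K] V) A A).symm.toLinearMap
    ∘ₗ (LinearMap.lTensor (V ⊗[K] V) (TensorProduct.comm K A A).toLinearMap)

end Defs


/-!
Fix `x, y, z ∈ V`. Both bracketings of `(x ⊗ a) ⋆ (y ⊗ b) ⋆ (z ⊗ c)` are the image of an element
of `A ⊗ A ⊗ A` under the single linear map `p ⊗ q ⊗ r ↦ ((x *_r y) *_q z) ⊗ p`: for `(u ⋆ v) ⋆ w`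
that element is `(Φ ⊗ Id)(Id ⊗ τ)(Φ ⊗ Id)(a ⊗ b ⊗ c)`, and for `u ⋆ (v ⋆ w)`, after using
`Φ`-associativity to rewrite `x *_a (y *_b z)`, it is `(Id ⊗ Φ)(Φ ⊗ Id)(Id ⊗ Φ)(a ⊗ b ⊗ c)`.
These agree by the ℓEAS identity, and associativity on pure tensors extends by trilinearity.
-/

theorem LinearMap.mul_assoc_of_tmul {K M N : Type*} [CommSemiring K] [AddCommMonoid M]
    [AddCommMonoid N] [Module K M] [Module K N] (mul : M ⊗[K] N →ₗ[K] M ⊗[K] N →ₗ[K] M ⊗[K] N)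
    (h : ∀ (x y z : M) (a b c : N),
      mul (mul (x ⊗ₜ a) (y ⊗ₜ b)) (z ⊗ₜ c) = mul (x ⊗ₜ a) (mul (y ⊗ₜ b) (z ⊗ₜ c)))
    (u v w : M ⊗[K] N) : mul (mul u v) w = mul u (mul v w) := by
  induction u using TensorProduct.induction_on with
  | zero => simp
  | add u₁ u₂ h₁ h₂ => simp only [map_add, LinearMap.add_apply, h₁, h₂]
  | tmul x a =>
    induction v using TensorProduct.induction_on with
    | zero => simp
    | add v₁ v₂ h₁ h₂ => simp only [map_add, LinearMap.add_apply, h₁, h₂]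
    | tmul y b =>
      induction w using TensorProduct.induction_on with
      | zero => simp
      | add w₁ w₂ h₁ h₂ => simp only [map_add, h₁, h₂]
      | tmul z c => exact h x y z a b c

section PhiAssociative

variable {K : Type} [Field K] {A : Type} [AddCommGroup A] [Module K A]
  {V : Type} [AddCommGroup V] [Module K V] (st : A →ₗ[K] V →ₗ[K] V →ₗ[K] V)

theorem sweedlerMul_tmul (x y : V) (c d : A) :
    sweedlerMul K A V st ((x ⊗ₜ y) ⊗ₜ (c ⊗ₜ d)) = st d x y ⊗ₜ c := by
  simp [sweedlerMul, evalSt]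

theorem rightTri_tmul (c d : A) (x y z : V) :
    rightTri K A V st ((c ⊗ₜ d) ⊗ₜ ((x ⊗ₜ y) ⊗ₜ z)) = st c (st d x y) z := by
  simp [rightTri, evalSt, TensorProduct.tensorTensorTensorComm, TensorProduct.leftComm]

theorem phiIdMap_tmul (Φ : A ⊗[K] A →ₗ[K] A ⊗[K] A) (p q r : A) :
    phiIdMap K A Φ (p ⊗ₜ (q ⊗ₜ r)) = TensorProduct.assoc K A A A (Φ (p ⊗ₜ q) ⊗ₜ r) := by
  simp [phiIdMap]

noncomputable def nestedEval (x y z : V) : A ⊗[K] (A ⊗[K] A) →ₗ[K] V ⊗[K] A :=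
  (TensorProduct.comm K A V).toLinearMap ∘ₗ
    (rightTri K A V st ∘ₗ (TensorProduct.mk K _ _).flip ((x ⊗ₜ y) ⊗ₜ z)).lTensor A

theorem nestedEval_tmul (x y z : V) (p : A) (t : A ⊗[K] A) :
    nestedEval st x y z (p ⊗ₜ t) = rightTri K A V st (t ⊗ₜ ((x ⊗ₜ y) ⊗ₜ z)) ⊗ₜ p := by
  simp [nestedEval]

theorem nestedEval_tmul_tmul (x y z : V) (p q r : A) :
    nestedEval st x y z (p ⊗ₜ (q ⊗ₜ r)) = st q (st r x y) z ⊗ₜ p := by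
  rw [nestedEval_tmul, rightTri_tmul]

theorem sweedlerMul_st_tmul (x y z : V) (q : A) (s : A ⊗[K] A) :
    sweedlerMul K A V st ((st q x y ⊗ₜ z) ⊗ₜ s)
      = nestedEval st x y z (TensorProduct.assoc K A A A (s ⊗ₜ q)) := by
  induction s using TensorProduct.induction_on with
  | zero => simp
  | tmul c d => rw [sweedlerMul_tmul, TensorProduct.assoc_tmul, nestedEval_tmul_tmul]
  | add s t hs ht => simp only [tmul_add, add_tmul, map_add, hs, ht]

theorem sweedlerMul_tmul_st {Φ : A ⊗[K] A →ₗ[K] A ⊗[K] A} (hst : IsPhiAssoc K A V Φ st)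
    (x y z : V) (q : A) (s : A ⊗[K] A) :
    sweedlerMul K A V st ((x ⊗ₜ st q y z) ⊗ₜ s)
      = nestedEval st x y z (Φ.lTensor A (TensorProduct.assoc K A A A (s ⊗ₜ q))) := by
  induction s using TensorProduct.induction_on with
  | zero => simp
  | tmul c d =>
    rw [sweedlerMul_tmul, hst, TensorProduct.assoc_tmul, LinearMap.lTensor_tmul, nestedEval_tmul]
  | add s t hs ht => simp only [tmul_add, add_tmul, map_add, hs, ht]

variable {Φ : A ⊗[K] A →ₗ[K] A ⊗[K] A} {mul : V ⊗[K] A →ₗ[K] V ⊗[K] A →ₗ[K] V ⊗[K] A}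
  (hmul : ∀ (x y : V) (a b : A),
    mul (x ⊗ₜ a) (y ⊗ₜ b) = sweedlerMul K A V st ((x ⊗ₜ y) ⊗ₜ (Φ (a ⊗ₜ b))))
include hmul

theorem mul_sweedlerMul_tmul (x y z : V) (c : A) (t : A ⊗[K] A) :
    mul (sweedlerMul K A V st ((x ⊗ₜ y) ⊗ₜ t)) (z ⊗ₜ c)
      = nestedEval st x y z (phiIdMap K A Φ
          ((TensorProduct.comm K A A).toLinearMap.lTensor A
            (TensorProduct.assoc K A A A (t ⊗ₜ c)))) := by
  induction t using TensorProduct.induction_on with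
  | zero => simp
  | tmul p q =>
    rw [sweedlerMul_tmul, hmul, sweedlerMul_st_tmul, TensorProduct.assoc_tmul,
      LinearMap.lTensor_tmul, LinearEquiv.coe_coe, TensorProduct.comm_tmul, phiIdMap_tmul]
  | add s t hs ht => simp only [tmul_add, add_tmul, map_add, LinearMap.add_apply, hs, ht]

theorem mul_tmul_sweedlerMul (hst : IsPhiAssoc K A V Φ st) (x y z : V) (a : A) (t : A ⊗[K] A) :
    mul (x ⊗ₜ a) (sweedlerMul K A V st ((y ⊗ₜ z) ⊗ₜ t))
      = nestedEval st x y z (Φ.lTensor A (phiIdMap K A Φ (a ⊗ₜ t))) := by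
  induction t using TensorProduct.induction_on with
  | zero => simp
  | tmul p q => rw [sweedlerMul_tmul, hmul, sweedlerMul_tmul_st st hst, phiIdMap_tmul]
  | add s t hs ht => simp only [tmul_add, map_add, hs, ht]

theorem mul_mul_tmul_eq_nestedEval (x y z : V) (a b c : A) :
    mul (mul (x ⊗ₜ a) (y ⊗ₜ b)) (z ⊗ₜ c)
      = nestedEval st x y z ((phiIdMap K A Φ ∘ₗ
          (TensorProduct.comm K A A).toLinearMap.lTensor A ∘ₗ phiIdMap K A Φ) (a ⊗ₜ (b ⊗ₜ c))) := by
  rw [hmul, mul_sweedlerMul_tmul st hmul, LinearMap.comp_apply, LinearMap.comp_apply,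
    phiIdMap_tmul]

theorem mul_tmul_mul_eq_nestedEval (hst : IsPhiAssoc K A V Φ st) (x y z : V) (a b c : A) :
    mul (x ⊗ₜ a) (mul (y ⊗ₜ b) (z ⊗ₜ c))
      = nestedEval st x y z ((Φ.lTensor A ∘ₗ phiIdMap K A Φ ∘ₗ Φ.lTensor A) (a ⊗ₜ (b ⊗ₜ c))) := by
  rw [hmul y z, mul_tmul_sweedlerMul st hmul hst, LinearMap.comp_apply, LinearMap.comp_apply,
    LinearMap.lTensor_tmul]

end PhiAssociative

/-- Proposition 3.3 (1). Let `(A, Φ)` be a linear extended associative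
semigroup and `(V, *)` a `Φ`-associative algebra. The bilinear product `⋆` on `V ⊗ A`
determined by `(x ⊗ a) ⋆ (y ⊗ b) = Σ (x *_{d_i} y) ⊗ c_i`, where
`Φ(a⊗b) = Σ c_i ⊗ d_i`, is associative. -/
theorem phi_assoc_gives_associative_on_tensor
    (K : Type) [Field K] (A : Type) [AddCommGroup A] [Module K A]
    (Φ : A ⊗[K] A →ₗ[K] A ⊗[K] A) (hΦ : IsLEAS K A Φ)
    (V : Type) [AddCommGroup V] [Module K V]
    (st : A →ₗ[K] V →ₗ[K] V →ₗ[K] V) (hst : IsPhiAssoc K A V Φ st)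
    (mul : V ⊗[K] A →ₗ[K] V ⊗[K] A →ₗ[K] V ⊗[K] A)
    (hmul : ∀ (x y : V) (a b : A),
      mul (x ⊗ₜ a) (y ⊗ₜ b) = sweedlerMul K A V st ((x ⊗ₜ y) ⊗ₜ (Φ (a ⊗ₜ b)))) :
    ∀ u v w : V ⊗[K] A, mul (mul u v) w = mul u (mul v w) := by
  refine mul.mul_assoc_of_tmul fun x y z a b c => ?_
  rw [mul_mul_tmul_eq_nestedEval st hmul, mul_tmul_mul_eq_nestedEval st hmul hst, hΦ]
end

section
/- Let K be a field, (A,Φ) a linear extended associative semigroup over K, and V a nonzero K-vector space. Equip T_A(V) = ⊕_{n≥1} A^{⊗(n−1)} ⊗ V^{⊗n} with the recursively defined products *_a (u *_a z = u·(a z) for z ∈ V; u *_a (v·(b z)) = Σ_i (u *_{d_i} v)·(c_i z) where Φ(a⊗b) = Σ_i c_i ⊗ d_i), and equip T_A(V) ⊗ A with the associative product ⋆ given by (u ⊗ a) ⋆ (v ⊗ b) = Σ_i (u *_{d_i} v) ⊗ c_i. Then the (non-unital) subalgebra of (T_A(V) ⊗ A, ⋆) generated by V ⊗ A equals all of T_A(V)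 ⊗ A if, and only if, Φ is surjective. -/
open TensorProduct

/-! If `Φ` is surjective, write `a ⊗ b = Φ t`; summing the products `(u ⊗ aᵢ) ⋆ (z ⊗ bᵢ)` along
`t = Σ aᵢ ⊗ bᵢ` gives `u·(b z) ⊗ a`, so the words `u` with `u ⊗ A` inside the subalgebra are
closed under appending letters and hence exhaust `T_A(V)`.

Conversely, the generators `V ⊗ A` have no length-two component, while the length-two component
of `(u ⊗ a) ⋆ (v ⊗ b)` is `Σ x (dᵢ y) ⊗ cᵢ` with `Σ cᵢ ⊗ dᵢ = Φ(a ⊗ b)`. Contracting the letters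
`x, y` with a functional `f` on `V` thus maps the whole subalgebra into `range Φ`, whereas it maps
`x (d x) ⊗ c` to `c ⊗ d` when `f x = 1`. -/

namespace TensorAlgebra

variable {R : Type*} [CommSemiring R] {M : Type*} [AddCommMonoid M] [Module R M]

theorem algebraMapInv_mul_ι (m : TensorAlgebra R M) (t : M) :
    algebraMapInv (m * ι R t) = 0 := by
  simp [algebraMapInv]

theorem ιInv_one : ιInv (1 : TensorAlgebra R M) = 0 := by
  let _ : Module Rᵐᵒᵖ M := Module.compHom _ ((RingHom.id R).fromOpposite mul_comm)
  have _ : IsCentralScalar R M := ⟨fun _ _ => rfl⟩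
  simp [ιInv, map_one]

theorem ιInv_mul_ι (m : TensorAlgebra R M) (t : M) :
    ιInv (m * ι R t) = algebraMapInv m • t := by
  let _ : Module Rᵐᵒᵖ M := Module.compHom _ ((RingHom.id R).fromOpposite mul_comm)
  have _ : IsCentralScalar R M := ⟨fun _ _ => rfl⟩
  have hfst : (TrivSqZeroExt.fstHom R R M).comp toTrivSqZeroExt =
      algebraMapInv :=
    hom_ext (by ext; simp [algebraMapInv])
  rw [← hfst]
  simp [ιInv, TrivSqZeroExt.snd_mul]

end TensorAlgebra

section TypedWords

variable {K : Type} [Field K] {A : Type} [AddCommGroup A] [Module K A]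
  {V : Type} [AddCommGroup V] [Module K V]

theorem iotaTA_apply (z : V) : iotaTA K A V z = z ⊗ₜ 1 := rfl

theorem evalSt_tmul {W : Type} [AddCommGroup W] [Module K W]
    (st : A →ₗ[K] W →ₗ[K] W →ₗ[K] W) (a : A) (x y : W) :
    evalSt K A W st (a ⊗ₜ (x ⊗ₜ y)) = st a x y := by
  simp [evalSt]

theorem appTA_tmul (t : A ⊗[K] V) (x : V) (m : TensorAlgebra K (A ⊗[K] V)) :
    appTA K A V t (x ⊗ₜ m) = x ⊗ₜ (m * TensorAlgebra.ι K t) := by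
  simp [appTA]

theorem recTA_tmul (st : A →ₗ[K] TAlg K A V →ₗ[K] TAlg K A V →ₗ[K] TAlg K A V)
    (c d : A) (u v : TAlg K A V) (z : V) :
    recTA K A V st ((c ⊗ₜ d) ⊗ₜ ((u ⊗ₜ v) ⊗ₜ z)) = appTA K A V (c ⊗ₜ z) (st d u v) := by
  simp [recTA, tensorTensorTensorComm, evalSt_tmul]

theorem sweedlerMul_tmul_s12 {W : Type} [AddCommGroup W] [Module K W]
    (st : A →ₗ[K] W →ₗ[K] W →ₗ[K] W) (u v : W) (c d : A) :
    sweedlerMul K A W st ((u ⊗ₜ v) ⊗ₜ (c ⊗ₜ d)) = st d u v ⊗ₜ c := by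
  simp [sweedlerMul, evalSt_tmul]

@[elab_as_elim]
theorem TAlg.induction_on {motive : TAlg K A V → Prop} (u : TAlg K A V)
    (iota : ∀ z, motive (iotaTA K A V z))
    (app : ∀ (b : A) (z : V) (u : TAlg K A V), motive u → motive (appTA K A V (b ⊗ₜ z) u))
    (add : ∀ u v, motive u → motive v → motive (u + v)) : motive u := by
  have zero : motive 0 := by simpa using iota 0
  have step : ∀ (n m : TensorAlgebra K (A ⊗[K] V)),
      (∀ x, motive (x ⊗ₜ m)) → ∀ x, motive (x ⊗ₜ (m * n)) := by
    intro n
    induction n using TensorAlgebra.induction with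
    | algebraMap r =>
      intro m hm x
      rw [← Algebra.commutes, ← Algebra.smul_def, tmul_smul, smul_tmul']
      exact hm _
    | ι t =>
      intro m hm x
      induction t using TensorProduct.induction_on with
      | zero => simpa using zero
      | tmul b z => simpa [appTA_tmul] using app b z _ (hm x)
      | add t t' ht ht' => simpa [mul_add, tmul_add] using add _ _ ht ht'
    | mul n n' hn hn' =>
      intro m hm
      simpa [mul_assoc] using hn' _ (hn m hm)
    | add n n' hn hn' =>
      intro m hm x
      simpa [mul_add, tmul_add] using add _ _ (hn m hm x) (hn' m hm x)
  induction u using TensorProduct.induction_on with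
  | zero => exact zero
  | tmul x m => simpa using step m 1 iota x
  | add u v hu hv => exact add u v hu hv

end TypedWords

section LengthProjections

variable {K : Type} [Field K] {A : Type} [AddCommGroup A] [Module K A]
  {V : Type} [AddCommGroup V] [Module K V]

-- Degree `k` of `TensorAlgebra K (A ⊗[K] V)` carries the typed words of length `k + 1`.
noncomputable def lengthOneProj : TAlg K A V →ₗ[K] V :=
  (TensorProduct.rid K V).toLinearMap ∘ₗ
    LinearMap.lTensor V (TensorAlgebra.algebraMapInv (M := A ⊗[K] V)).toLinearMap

noncomputable def lengthTwoProj : TAlg K A V →ₗ[K] V ⊗[K] (A ⊗[K] V) :=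
  LinearMap.lTensor V TensorAlgebra.ιInv

theorem lengthOneProj_iotaTA (z : V) : lengthOneProj (iotaTA K A V z) = z := by
  simp [lengthOneProj, iotaTA_apply]

theorem lengthOneProj_appTA (t : A ⊗[K] V) (u : TAlg K A V) :
    lengthOneProj (appTA K A V t u) = 0 := by
  induction u using TensorProduct.induction_on with
  | zero => simp
  | tmul x m => simp [lengthOneProj, appTA_tmul, TensorAlgebra.algebraMapInv_mul_ι]
  | add u v hu hv => rw [map_add, map_add, hu, hv, add_zero]

theorem lengthTwoProj_iotaTA (z : V) : lengthTwoProj (iotaTA K A V z) = 0 := by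
  simp [lengthTwoProj, iotaTA_apply, TensorAlgebra.ιInv_one]

theorem lengthTwoProj_appTA (t : A ⊗[K] V) (u : TAlg K A V) :
    lengthTwoProj (appTA K A V t u) = lengthOneProj u ⊗ₜ t := by
  induction u using TensorProduct.induction_on with
  | zero => simp
  | tmul x m =>
    simp [lengthTwoProj, lengthOneProj, appTA_tmul, TensorAlgebra.ιInv_mul_ι, smul_tmul]
  | add u v hu hv => rw [map_add, map_add, hu, hv, map_add, add_tmul]

theorem map_recTA_eq_zero {W : Type} [AddCommGroup W] [Module K W]
    (st : A →ₗ[K] TAlg K A V →ₗ[K] TAlg K A V →ₗ[K] TAlg K A V)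
    (f : TAlg K A V →ₗ[K] W) {u v : TAlg K A V} {z : V}
    (hf : ∀ c d, f (appTA K A V (c ⊗ₜ z) (st d u v)) = 0) (s : A ⊗[K] A) :
    f (recTA K A V st (s ⊗ₜ ((u ⊗ₜ v) ⊗ₜ z))) = 0 := by
  induction s using TensorProduct.induction_on with
  | zero => simp
  | tmul c d => rw [recTA_tmul, hf]
  | add s s' hs hs' => rw [add_tmul, map_add, map_add, hs, hs', add_zero]

variable {Φ : A ⊗[K] A →ₗ[K] A ⊗[K] A}
  {st : A →ₗ[K] TAlg K A V →ₗ[K] TAlg K A V →ₗ[K] TAlg K A V}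

theorem lengthOneProj_st (hst : SatisfiesRecTA K A V Φ st) (a : A) (u v : TAlg K A V) :
    lengthOneProj (st a u v) = 0 := by
  induction v using TAlg.induction_on with
  | iota z => rw [hst.1, lengthOneProj_appTA]
  | app b z v _ =>
    rw [hst.2]
    exact map_recTA_eq_zero st _ (fun _ _ => lengthOneProj_appTA _ _) _
  | add v v' hv hv' => rw [map_add, map_add, hv, hv', add_zero]

theorem lengthTwoProj_st (hst : SatisfiesRecTA K A V Φ st) (a : A) (u v : TAlg K A V) :
    lengthTwoProj (st a u v) = lengthOneProj u ⊗ₜ (a ⊗ₜ lengthOneProj v) := by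
  induction v using TAlg.induction_on with
  | iota z => rw [hst.1, lengthTwoProj_appTA, lengthOneProj_iotaTA]
  | app b z v _ =>
    rw [hst.2, lengthOneProj_appTA, tmul_zero, tmul_zero]
    exact map_recTA_eq_zero st _ (fun c d => by
      rw [lengthTwoProj_appTA, lengthOneProj_st hst, zero_tmul]) _
  | add v v' hv hv' => rw [map_add, map_add, hv, hv', map_add, tmul_add, tmul_add]

end LengthProjections

section Generation

variable {K : Type} [Field K] {A : Type} [AddCommGroup A] [Module K A]
  {V : Type} [AddCommGroup V] [Module K V]
  {Φ : A ⊗[K] A →ₗ[K] A ⊗[K] A}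
  {st : A →ₗ[K] TAlg K A V →ₗ[K] TAlg K A V →ₗ[K] TAlg K A V}
  {mul : TAlg K A V ⊗[K] A →ₗ[K] TAlg K A V ⊗[K] A →ₗ[K] TAlg K A V ⊗[K] A}

theorem appTA_tmul_mem_of_surjective (hsurj : Function.Surjective Φ)
    (hst : SatisfiesRecTA K A V Φ st)
    (hmul : ∀ (u v : TAlg K A V) (a b : A),
      mul (u ⊗ₜ a) (v ⊗ₜ b) = sweedlerMul K A (TAlg K A V) st ((u ⊗ₜ v) ⊗ₜ (Φ (a ⊗ₜ b))))
    {S : Submodule K (TAlg K A V ⊗[K] A)}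
    (hgen : ∀ (z : V) (a : A), iotaTA K A V z ⊗ₜ a ∈ S)
    (hclosed : ∀ u ∈ S, ∀ v ∈ S, mul u v ∈ S)
    {u : TAlg K A V} (hu : ∀ a, u ⊗ₜ a ∈ S) (b : A) (z : V) (a : A) :
    appTA K A V (b ⊗ₜ z) u ⊗ₜ a ∈ S := by
  obtain ⟨t, ht⟩ := hsurj (a ⊗ₜ b)
  have hmem : ∀ s, sweedlerMul K A (TAlg K A V) st ((u ⊗ₜ iotaTA K A V z) ⊗ₜ Φ s) ∈ S := by
    intro s
    induction s using TensorProduct.induction_on with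
    | zero => simp
    | tmul a' b' => rw [← hmul]; exact hclosed _ (hu a') _ (hgen z b')
    | add s s' hs hs' => rw [map_add, tmul_add, map_add]; exact S.add_mem hs hs'
  simpa [ht, sweedlerMul_tmul_s12, hst.1] using hmem t

theorem eq_top_of_surjective (hsurj : Function.Surjective Φ)
    (hst : SatisfiesRecTA K A V Φ st)
    (hmul : ∀ (u v : TAlg K A V) (a b : A),
      mul (u ⊗ₜ a) (v ⊗ₜ b) = sweedlerMul K A (TAlg K A V) st ((u ⊗ₜ v) ⊗ₜ (Φ (a ⊗ₜ b))))
    {S : Submodule K (TAlg K A V ⊗[K] A)}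
    (hgen : ∀ (z : V) (a : A), iotaTA K A V z ⊗ₜ a ∈ S)
    (hclosed : ∀ u ∈ S, ∀ v ∈ S, mul u v ∈ S) : S = ⊤ := by
  have hall : ∀ u a, u ⊗ₜ a ∈ S := fun u => by
    induction u using TAlg.induction_on with
    | iota z => exact hgen z
    | app b z u hu => exact appTA_tmul_mem_of_surjective hsurj hst hmul hgen hclosed hu b z
    | add u v hu hv => exact fun a => by rw [add_tmul]; exact S.add_mem (hu a) (hv a)
  rw [eq_top_iff, ← span_tmul_eq_top, Submodule.span_le]
  rintro _ ⟨u, a, rfl⟩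
  exact hall u a

noncomputable def lengthTwoContraction (f : V →ₗ[K] K) : TAlg K A V ⊗[K] A →ₗ[K] A ⊗[K] A :=
  (TensorProduct.comm K A A).toLinearMap ∘ₗ LinearMap.rTensor A
    ((TensorProduct.lid K A).toLinearMap ∘ₗ
      TensorProduct.map f ((TensorProduct.rid K A).toLinearMap ∘ₗ LinearMap.lTensor A f) ∘ₗ
      lengthTwoProj)

theorem lengthTwoContraction_tmul (f : V →ₗ[K] K) {u : TAlg K A V} {x y : V} {d : A}
    (hu : lengthTwoProj u = x ⊗ₜ (d ⊗ₜ y)) (c : A) :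
    lengthTwoContraction f (u ⊗ₜ c) = (f x * f y) • (c ⊗ₜ d) := by
  simp [lengthTwoContraction, hu, smul_tmul', mul_comm]

theorem lengthTwoContraction_iotaTA_tmul (f : V →ₗ[K] K) (z : V) (a : A) :
    lengthTwoContraction f (iotaTA K A V z ⊗ₜ a) = 0 := by
  simp [lengthTwoContraction, lengthTwoProj_iotaTA]

theorem lengthTwoContraction_sweedlerMul (hst : SatisfiesRecTA K A V Φ st) (f : V →ₗ[K] K)
    (u v : TAlg K A V) (s : A ⊗[K] A) :
    lengthTwoContraction f (sweedlerMul K A (TAlg K A V) st ((u ⊗ₜ v) ⊗ₜ s)) =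
      (f (lengthOneProj u) * f (lengthOneProj v)) • s := by
  induction s using TensorProduct.induction_on with
  | zero => simp
  | tmul c d => rw [sweedlerMul_tmul_s12, lengthTwoContraction_tmul f (lengthTwoProj_st hst d u v)]
  | add s s' hs hs' => rw [tmul_add, map_add, map_add, hs, hs', smul_add]

theorem lengthTwoContraction_mul_mem_range (hst : SatisfiesRecTA K A V Φ st)
    (hmul : ∀ (u v : TAlg K A V) (a b : A),
      mul (u ⊗ₜ a) (v ⊗ₜ b) = sweedlerMul K A (TAlg K A V) st ((u ⊗ₜ v) ⊗ₜ (Φ (a ⊗ₜ b))))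
    (f : V →ₗ[K] K) (p q : TAlg K A V ⊗[K] A) :
    lengthTwoContraction f (mul p q) ∈ LinearMap.range Φ := by
  induction p using TensorProduct.induction_on with
  | zero => simp
  | tmul u a =>
    induction q using TensorProduct.induction_on with
    | zero => simp
    | tmul v b =>
      rw [hmul, lengthTwoContraction_sweedlerMul hst]
      exact Submodule.smul_mem _ _ (LinearMap.mem_range_self Φ _)
    | add q q' hq hq' => rw [map_add, map_add]; exact Submodule.add_mem _ hq hq'
  | add p p' hp hp' => rw [map_add, LinearMap.add_apply, map_add]; exact Submodule.add_mem _ hp hp'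

theorem surjective_of_eq_top [Nontrivial V] (hst : SatisfiesRecTA K A V Φ st)
    (hmul : ∀ (u v : TAlg K A V) (a b : A),
      mul (u ⊗ₜ a) (v ⊗ₜ b) = sweedlerMul K A (TAlg K A V) st ((u ⊗ₜ v) ⊗ₜ (Φ (a ⊗ₜ b))))
    (H : ∀ S : Submodule K (TAlg K A V ⊗[K] A),
        (∀ (z : V) (a : A), iotaTA K A V z ⊗ₜ a ∈ S) →
        (∀ u ∈ S, ∀ v ∈ S, mul u v ∈ S) → S = ⊤) :
    Function.Surjective Φ := by
  obtain ⟨x, hx⟩ := exists_ne (0 : V)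
  obtain ⟨f, hf⟩ := Module.Projective.exists_dual_eq_one K hx
  have htop := H ((LinearMap.range Φ).comap (lengthTwoContraction f))
    (fun z a => by simp [lengthTwoContraction_iotaTA_tmul])
    (fun p _ q _ => lengthTwoContraction_mul_mem_range hst hmul f p q)
  rw [← LinearMap.range_eq_top, eq_top_iff, ← span_tmul_eq_top, Submodule.span_le]
  rintro _ ⟨c, d, rfl⟩
  have hword : lengthTwoProj (appTA K A V (d ⊗ₜ x) (iotaTA K A V x)) = x ⊗ₜ (d ⊗ₜ x) := by
    rw [lengthTwoProj_appTA, lengthOneProj_iotaTA]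
  have hcd := lengthTwoContraction_tmul f hword c
  rw [hf, one_mul, one_smul] at hcd
  rw [← hcd]
  exact Submodule.eq_top_iff'.mp htop _

end Generation

theorem generated_by_VA_iff_surjective_general
    (K : Type) [Field K] (A : Type) [AddCommGroup A] [Module K A]
    (Φ : A ⊗[K] A →ₗ[K] A ⊗[K] A)
    (V : Type) [AddCommGroup V] [Module K V] [Nontrivial V]
    (st : A →ₗ[K] TAlg K A V →ₗ[K] TAlg K A V →ₗ[K] TAlg K A V)
    (hst : SatisfiesRecTA K A V Φ st)
    (mul : TAlg K A V ⊗[K] A →ₗ[K] TAlg K A V ⊗[K] A →ₗ[K] TAlg K A V ⊗[K] A)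
    (hmul : ∀ (u v : TAlg K A V) (a b : A),
      mul (u ⊗ₜ a) (v ⊗ₜ b) = sweedlerMul K A (TAlg K A V) st ((u ⊗ₜ v) ⊗ₜ (Φ (a ⊗ₜ b)))) :
    (∀ S : Submodule K (TAlg K A V ⊗[K] A),
        (∀ (z : V) (a : A), (iotaTA K A V z) ⊗ₜ a ∈ S) →
        (∀ u ∈ S, ∀ v ∈ S, mul u v ∈ S) →
        S = ⊤)
      ↔ Function.Surjective Φ :=
  ⟨surjective_of_eq_top hst hmul,
    fun hsurj _ hgen hclosed => eq_top_of_surjective hsurj hst hmul hgen hclosed⟩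

/-- Proposition 3.4 (1). Let `(A, Φ)` be a linear extended associative
semigroup, `V` a nonzero vector space, `T_A(V)` the free `Φ`-associative algebra with its
recursively defined products `*_a`, and `⋆` the associated associative product on
`T_A(V) ⊗ A` given by `(u ⊗ a) ⋆ (v ⊗ b) = Σ (u *_{d_i} v) ⊗ c_i` where
`Φ(a⊗b) = Σ c_i ⊗ d_i`. Then the subalgebra of `(T_A(V) ⊗ A, ⋆)` generated by `V ⊗ A`
(embedded via length-one typed words) is all of `T_A(V) ⊗ A` if, and only if, `Φ` is
surjective. -/
theorem generated_by_VA_iff_surjective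
    (K : Type) [Field K] (A : Type) [AddCommGroup A] [Module K A]
    (Φ : A ⊗[K] A →ₗ[K] A ⊗[K] A) (hΦ : IsLEAS K A Φ)
    (V : Type) [AddCommGroup V] [Module K V] [Nontrivial V]
    (st : A →ₗ[K] TAlg K A V →ₗ[K] TAlg K A V →ₗ[K] TAlg K A V)
    (hst : SatisfiesRecTA K A V Φ st)
    (mul : TAlg K A V ⊗[K] A →ₗ[K] TAlg K A V ⊗[K] A →ₗ[K] TAlg K A V ⊗[K] A)
    (hmul : ∀ (u v : TAlg K A V) (a b : A),
      mul (u ⊗ₜ a) (v ⊗ₜ b) = sweedlerMul K A (TAlg K A V) st ((u ⊗ₜ v) ⊗ₜ (Φ (a ⊗ₜ b)))) :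
    (∀ S : Submodule K (TAlg K A V ⊗[K] A),
        (∀ (z : V) (a : A), (iotaTA K A V z) ⊗ₜ a ∈ S) →
        (∀ u ∈ S, ∀ v ∈ S, mul u v ∈ S) →
        S = ⊤)
      ↔ Function.Surjective Φ :=
  generated_by_VA_iff_surjective_general K A Φ V st hst mul hmul
end
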